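/- For all integers p ≥ 1, n ≥ 1, every real λ ≥ 0 and every real w > 0, the integrals ∫₀^∞ u² f_p(uw;λ) f_n(u) du and ∫₀^∞ u³ f_p(uw;λ) f_n(u) du are finite and positive, and (n+p+2) · ∫₀^∞ u² f_p(uw;λ) f_n(u) du ≤ (1+w) · ∫₀^∞ u³ f_p(uw;λ) f_n(u) du; equivalently, the ratio of the first integral to the second is at most (1+w)/(n+p+2). -/

import Mathlib

/-!
Expanding the noncentral density as its Poisson mixture `∑ⱼ πⱼ f_{p+2j}`, the `j`-th term of
`u ^ m f_p(u w; λ) f_n(u)` is a constant times `u ^ (s - 1) e^{-(1 + w) u / 2}` with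
`s = m + (p + 2j)/2 + n/2 - 1`, whose integral is a Gamma integral. Consecutive terms of the
resulting series have ratio `O(1/j)`, so the series converges and, all terms being nonnegative,
it equals the integral of the mixture. Raising `m` by one multiplies the `j`-th term by
`2 s / (1 + w)`, and for `m = 2` we have `2 s = n + p + 2 + 2j ≥ n + p + 2`.
-/

open MeasureTheory Real Set

noncomputable section

/-- Density of the chi-square distribution with `k` degrees of freedom. -/
def chiSqPdf (k : ℕ) (x : ℝ) : ℝ :=
  if 0 < x then
    x ^ ((k : ℝ) / 2 - 1) * Real.exp (-x / 2) /
      (2 ^ ((k : ℝ) / 2) * Real.Gamma ((k : ℝ) / 2))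
  else 0

/-- Density of the noncentral chi-square distribution with `p` degrees of freedom and
noncentrality parameter `lam`. -/
def ncChiSqPdf (p : ℕ) (lam : ℝ) (x : ℝ) : ℝ :=
  ∑' j : ℕ, Real.exp (-lam / 2) * ((lam / 2) ^ j / (Nat.factorial j)) * chiSqPdf (p + 2 * j) x

section SeriesOfNonneg

variable {α ι : Type*} [MeasurableSpace α] {μ : Measure α} [Countable ι] {F : ι → α → ℝ}

theorem integrable_tsum_of_nonneg (hF_nonneg : ∀ i, 0 ≤ᵐ[μ] F i)
    (hF_int : ∀ i, Integrable (F i) μ) (hF_sum : Summable fun i ↦ ∫ a, F i a ∂μ) :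
    Integrable (fun a ↦ ∑' i, F i a) μ := by
  have hF_meas i : AEMeasurable (fun a ↦ ENNReal.ofReal (F i a)) μ :=
    (hF_int i).aemeasurable.ennreal_ofReal
  have h_eq : (fun a ↦ ∑' i, F i a) =ᵐ[μ] fun a ↦ (∑' i, ENNReal.ofReal (F i a)).toReal := by
    filter_upwards [ae_all_iff.2 hF_nonneg] with a ha
    rw [ENNReal.tsum_toReal_eq fun i ↦ ENNReal.ofReal_ne_top]
    exact tsum_congr fun i ↦ (ENNReal.toReal_ofReal (ha i)).symm
  refine (integrable_toReal_of_lintegral_ne_top (AEMeasurable.tsum hF_meas) ?_).congr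
    h_eq.symm
  calc ∫⁻ a, ∑' i, ENNReal.ofReal (F i a) ∂μ
      = ∑' i, ENNReal.ofReal (∫ a, F i a ∂μ) := by
        rw [lintegral_tsum hF_meas]
        exact tsum_congr fun i ↦
          (ofReal_integral_eq_lintegral_ofReal (hF_int i) (hF_nonneg i)).symm
    _ = ENNReal.ofReal (∑' i, ∫ a, F i a ∂μ) :=
        (ENNReal.ofReal_tsum_of_nonneg (fun i ↦ integral_nonneg_of_ae (hF_nonneg i)) hF_sum).symm
    _ ≠ ⊤ := ENNReal.ofReal_ne_top

theorem hasSum_integral_of_nonneg (hF_nonneg : ∀ i, 0 ≤ᵐ[μ] F i)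
    (hF_int : ∀ i, Integrable (F i) μ) (hF_sum : Summable fun i ↦ ∫ a, F i a ∂μ) :
    HasSum (fun i ↦ ∫ a, F i a ∂μ) (∫ a, ∑' i, F i a ∂μ) := by
  have h_norm i : ∫ a, ‖F i a‖ ∂μ = ∫ a, F i a ∂μ :=
    integral_congr_ae <| (hF_nonneg i).mono fun a ha ↦ Real.norm_of_nonneg ha
  exact hasSum_integral_of_summable_integral_norm hF_int (by simpa only [h_norm] using hF_sum)

end SeriesOfNonneg

section ChiSquareCrossMoments

def chiSqNormConst (k : ℕ) : ℝ := 2 ^ ((k : ℝ) / 2) * Gamma ((k : ℝ) / 2)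

theorem chiSqNormConst_nonneg (k : ℕ) : 0 ≤ chiSqNormConst k :=
  mul_nonneg (by positivity) (Gamma_nonneg_of_nonneg (by positivity))

theorem chiSqPdf_nonneg (k : ℕ) (x : ℝ) : 0 ≤ chiSqPdf k x := by
  unfold chiSqPdf
  split_ifs
  · exact div_nonneg (by positivity) (chiSqNormConst_nonneg k)
  · exact le_rfl

theorem chiSqNormConst_pos {k : ℕ} (hk : 0 < k) : 0 < chiSqNormConst k :=
  mul_pos (by positivity) (Gamma_pos_of_pos (by positivity))

theorem chiSqNormConst_add_two {k : ℕ} (hk : k ≠ 0) :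
    chiSqNormConst (k + 2) = k * chiSqNormConst k := by
  have hk' : (k : ℝ) / 2 ≠ 0 := by positivity
  have h_arg : ((k + 2 : ℕ) : ℝ) / 2 = (k : ℝ) / 2 + 1 := by push_cast; ring
  rw [chiSqNormConst, chiSqNormConst, h_arg, rpow_add_one two_ne_zero, Gamma_add_one hk']
  ring

/-- The exponent `s` in
`∫₀^∞ u ^ m f_k(u w) f_n(u) du = C ∫₀^∞ u ^ (s - 1) e^{-(1 + w) u / 2} du`. -/
def chiSqCrossIndex (k n m : ℕ) : ℝ := m + (k : ℝ) / 2 + (n : ℝ) / 2 - 1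

def chiSqCrossMoment (k n m : ℕ) (w : ℝ) : ℝ :=
  w ^ ((k : ℝ) / 2 - 1) / (chiSqNormConst k * chiSqNormConst n) *
    ((1 / ((1 + w) / 2)) ^ chiSqCrossIndex k n m * Gamma (chiSqCrossIndex k n m))

theorem pow_mul_chiSqPdf_mul_chiSqPdf {k n m : ℕ} {w u : ℝ} (hw : 0 < w) (hu : 0 < u) :
    u ^ m * chiSqPdf k (u * w) * chiSqPdf n u =
      w ^ ((k : ℝ) / 2 - 1) / (chiSqNormConst k * chiSqNormConst n) *
        (u ^ (chiSqCrossIndex k n m - 1) * exp (-((1 + w) / 2 * u))) := by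
  have h_pow : u ^ (chiSqCrossIndex k n m - 1) =
      u ^ m * u ^ ((k : ℝ) / 2 - 1) * u ^ ((n : ℝ) / 2 - 1) := by
    rw [← rpow_natCast u m, ← rpow_add hu, ← rpow_add hu, chiSqCrossIndex]
    ring_nf
  have h_exp : exp (-((1 + w) / 2 * u)) = exp (-(u * w) / 2) * exp (-u / 2) := by
    rw [← exp_add]
    ring_nf
  rw [chiSqPdf, chiSqPdf, if_pos (mul_pos hu hw), if_pos hu, mul_rpow hu.le hw.le, h_pow, h_exp,
    chiSqNormConst, chiSqNormConst]
  ring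

theorem integrableOn_pow_mul_chiSqPdf_mul_chiSqPdf {k n m : ℕ} {w : ℝ} (hw : 0 < w)
    (hs : 0 < chiSqCrossIndex k n m) :
    IntegrableOn (fun u ↦ u ^ m * chiSqPdf k (u * w) * chiSqPdf n u) (Ioi 0) := by
  have h_gamma := integrableOn_rpow_mul_exp_neg_mul_rpow (s := chiSqCrossIndex k n m - 1) (p := 1)
    (by linarith) one_pos (by linarith : (0 : ℝ) < (1 + w) / 2)
  refine IntegrableOn.congr_fun
    (h_gamma.const_mul (w ^ ((k : ℝ) / 2 - 1) / (chiSqNormConst k * chiSqNormConst n)))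
    (fun u hu ↦ ?_) measurableSet_Ioi
  rw [pow_mul_chiSqPdf_mul_chiSqPdf hw hu, rpow_one, neg_mul]

theorem integral_pow_mul_chiSqPdf_mul_chiSqPdf {k n m : ℕ} {w : ℝ} (hw : 0 < w)
    (hs : 0 < chiSqCrossIndex k n m) :
    ∫ u in Ioi 0, u ^ m * chiSqPdf k (u * w) * chiSqPdf n u = chiSqCrossMoment k n m w := by
  rw [setIntegral_congr_fun measurableSet_Ioi fun u hu ↦ pow_mul_chiSqPdf_mul_chiSqPdf hw hu,
    integral_const_mul, integral_rpow_mul_exp_neg_mul_Ioi hs (by linarith), chiSqCrossMoment]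

theorem chiSqCrossMoment_nonneg {k n m : ℕ} {w : ℝ} (hw : 0 < w)
    (hs : 0 < chiSqCrossIndex k n m) : 0 ≤ chiSqCrossMoment k n m w := by
  have := chiSqNormConst_nonneg k
  have := chiSqNormConst_nonneg n
  have := Gamma_pos_of_pos hs
  unfold chiSqCrossMoment
  positivity

theorem chiSqCrossMoment_pos {k n m : ℕ} {w : ℝ} (hk : 0 < k) (hn : 0 < n) (hw : 0 < w)
    (hs : 0 < chiSqCrossIndex k n m) : 0 < chiSqCrossMoment k n m w := by
  have := chiSqNormConst_pos hk
  have := chiSqNormConst_pos hn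
  have := Gamma_pos_of_pos hs
  unfold chiSqCrossMoment
  positivity

theorem one_div_rpow_mul_Gamma_add_one {b s : ℝ} (hb : 0 < b) (hs : s ≠ 0) :
    (1 / b) ^ (s + 1) * Gamma (s + 1) = s / b * ((1 / b) ^ s * Gamma s) := by
  rw [rpow_add_one (by positivity), Gamma_add_one hs]
  ring

theorem chiSqCrossMoment_succ {k n m : ℕ} {w : ℝ} (hw : 0 < w)
    (hs : 0 < chiSqCrossIndex k n m) :
    (1 + w) * chiSqCrossMoment k n (m + 1) w =
      2 * chiSqCrossIndex k n m * chiSqCrossMoment k n m w := by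
  have h_index : chiSqCrossIndex k n (m + 1) = chiSqCrossIndex k n m + 1 := by
    simp only [chiSqCrossIndex]; push_cast; ring
  rw [chiSqCrossMoment, chiSqCrossMoment, h_index,
    one_div_rpow_mul_Gamma_add_one (by linarith) hs.ne']
  field_simp

theorem chiSqCrossMoment_add_two {k n m : ℕ} {w : ℝ} (hk : k ≠ 0) (hw : 0 < w)
    (hs : 0 < chiSqCrossIndex k n m) :
    k * (1 + w) * chiSqCrossMoment (k + 2) n m w =
      2 * w * chiSqCrossIndex k n m * chiSqCrossMoment k n m w := by
  have h_index : chiSqCrossIndex (k + 2) n m = chiSqCrossIndex k n m + 1 := by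
    simp only [chiSqCrossIndex]; push_cast; ring
  have h_exp : ((k + 2 : ℕ) : ℝ) / 2 - 1 = ((k : ℝ) / 2 - 1) + 1 := by push_cast; ring
  have := chiSqNormConst_pos (Nat.pos_of_ne_zero hk)
  rw [chiSqCrossMoment, chiSqCrossMoment, h_index, h_exp, rpow_add_one hw.ne',
    chiSqNormConst_add_two hk, one_div_rpow_mul_Gamma_add_one (by linarith) hs.ne']
  field_simp

end ChiSquareCrossMoments

section NoncentralCrossMoments

def poissonWeight (lam : ℝ) (j : ℕ) : ℝ := exp (-lam / 2) * ((lam / 2) ^ j / (Nat.factorial j))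

theorem poissonWeight_nonneg {lam : ℝ} (hlam : 0 ≤ lam) (j : ℕ) : 0 ≤ poissonWeight lam j := by
  unfold poissonWeight
  positivity

theorem poissonWeight_zero_pos (lam : ℝ) : 0 < poissonWeight lam 0 := by
  simp only [poissonWeight, pow_zero, Nat.factorial_zero, Nat.cast_one, div_one, mul_one]
  exact exp_pos _

theorem poissonWeight_succ (lam : ℝ) (j : ℕ) :
    poissonWeight lam (j + 1) = lam / 2 / (j + 1) * poissonWeight lam j := by
  simp only [poissonWeight, pow_succ, Nat.factorial_succ, Nat.cast_mul, Nat.cast_succ]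
  field_simp

theorem chiSqCrossIndex_add_two_mul (k n m j : ℕ) :
    chiSqCrossIndex (k + 2 * j) n m = chiSqCrossIndex k n m + j := by
  simp only [chiSqCrossIndex]
  push_cast
  ring

theorem summable_poissonWeight_mul_chiSqCrossMoment {p n m : ℕ} {lam w : ℝ} (hp : p ≠ 0)
    (hlam : 0 ≤ lam) (hw : 0 < w) (hs : 0 < chiSqCrossIndex p n m) :
    Summable fun j ↦ poissonWeight lam j * chiSqCrossMoment (p + 2 * j) n m w := by
  set s := chiSqCrossIndex p n m
  set a := fun j ↦ poissonWeight lam j * chiSqCrossMoment (p + 2 * j) n m w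
  set r := fun j : ℕ ↦ lam * w * (s + j) / ((j + 1) * (p + 2 * j) * (1 + w))
  have h_ratio (j : ℕ) : a (j + 1) = r j * a j := by
    have h_two := chiSqCrossMoment_add_two (k := p + 2 * j) (n := n) (m := m) (by omega) hw
      (by rw [chiSqCrossIndex_add_two_mul]; positivity)
    rw [chiSqCrossIndex_add_two_mul, show p + 2 * j + 2 = p + 2 * (j + 1) by ring] at h_two
    have h_pos : (0 : ℝ) < (p + 2 * j : ℕ) * (1 + w) := by positivity
    have h_next : chiSqCrossMoment (p + 2 * (j + 1)) n m w =
        2 * w * (s + j) / ((p + 2 * j : ℕ) * (1 + w)) * chiSqCrossMoment (p + 2 * j) n m w := by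
      rw [div_mul_eq_mul_div, eq_div_iff h_pos.ne', mul_comm]
      exact h_two
    simp only [a, r, poissonWeight_succ, h_next]
    push_cast
    field_simp
  -- `r j ≤ λ (s + 1) / (p + 2 j)`, which is at most `1 / 2` once `j ≥ λ (s + 1)`.
  have h_small (j : ℕ) (hj : lam * (s + 1) ≤ j) : r j ≤ 1 / 2 := by
    rw [div_le_iff₀ (by positivity)]
    calc lam * w * (s + j) ≤ w * (j + 1) * (lam * (s + 1)) := by
          have : (0 : ℝ) ≤ lam * w * (s * j) := by positivity
          nlinarith
      _ ≤ w * (j + 1) * j := by gcongr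
      _ ≤ 1 / 2 * ((j + 1) * (p + 2 * j) * (1 + w)) := by
          have : (0 : ℝ) ≤ (j + 1) * (p * (1 + w) + 2 * j) := by positivity
          nlinarith
  refine summable_of_ratio_norm_eventually_le (r := 1 / 2) (by norm_num)
    (Filter.eventually_atTop.2 ⟨⌈lam * (s + 1)⌉₊, fun j hj ↦ ?_⟩)
  rw [h_ratio, norm_mul, Real.norm_of_nonneg (by positivity)]
  gcongr
  exact h_small j ((Nat.ceil_le).1 hj)

theorem hasSum_integral_pow_mul_ncChiSqPdf_mul_chiSqPdf {p n m : ℕ} {lam w : ℝ} (hp : p ≠ 0)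
    (hlam : 0 ≤ lam) (hw : 0 < w) (hs : 0 < chiSqCrossIndex p n m) :
    IntegrableOn (fun u ↦ u ^ m * ncChiSqPdf p lam (u * w) * chiSqPdf n u) (Ioi 0) ∧
      HasSum (fun j ↦ poissonWeight lam j * chiSqCrossMoment (p + 2 * j) n m w)
        (∫ u in Ioi 0, u ^ m * ncChiSqPdf p lam (u * w) * chiSqPdf n u) := by
  set F := fun (j : ℕ) (u : ℝ) ↦
    poissonWeight lam j * (u ^ m * chiSqPdf (p + 2 * j) (u * w) * chiSqPdf n u)
  have hs_j (j : ℕ) : 0 < chiSqCrossIndex (p + 2 * j) n m := by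
    rw [chiSqCrossIndex_add_two_mul]
    positivity
  have h_tsum :
      (fun u ↦ u ^ m * ncChiSqPdf p lam (u * w) * chiSqPdf n u) = fun u ↦ ∑' j, F j u := by
    ext u
    simp only [F, ncChiSqPdf, ← tsum_mul_left, ← tsum_mul_right]
    exact tsum_congr fun j ↦ by rw [poissonWeight]; ring
  have h_nonneg (j : ℕ) : 0 ≤ᵐ[volume.restrict (Ioi 0)] F j :=
    ae_restrict_of_forall_mem measurableSet_Ioi fun u (hu : 0 < u) ↦
      mul_nonneg (poissonWeight_nonneg hlam j) <|
        mul_nonneg (mul_nonneg (by positivity) (chiSqPdf_nonneg _ _)) (chiSqPdf_nonneg _ _)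
  have h_int (j : ℕ) : IntegrableOn (F j) (Ioi 0) :=
    (integrableOn_pow_mul_chiSqPdf_mul_chiSqPdf hw (hs_j j)).const_mul _
  have h_integral (j : ℕ) :
      ∫ u in Ioi 0, F j u = poissonWeight lam j * chiSqCrossMoment (p + 2 * j) n m w := by
    rw [integral_const_mul, integral_pow_mul_chiSqPdf_mul_chiSqPdf hw (hs_j j)]
  have h_sum : Summable fun j ↦ ∫ u in Ioi 0, F j u := by
    simpa only [h_integral] using summable_poissonWeight_mul_chiSqCrossMoment hp hlam hw hs
  rw [h_tsum]
  refine ⟨integrable_tsum_of_nonneg h_nonneg h_int h_sum, ?_⟩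
  simpa only [h_integral] using hasSum_integral_of_nonneg h_nonneg h_int h_sum

theorem integral_pow_mul_ncChiSqPdf_mul_chiSqPdf_pos {p n m : ℕ} {lam w : ℝ} (hp : p ≠ 0)
    (hn : n ≠ 0) (hlam : 0 ≤ lam) (hw : 0 < w) (hs : 0 < chiSqCrossIndex p n m) :
    0 < ∫ u in Ioi 0, u ^ m * ncChiSqPdf p lam (u * w) * chiSqPdf n u := by
  have hs_j (j : ℕ) : 0 < chiSqCrossIndex (p + 2 * j) n m := by
    rw [chiSqCrossIndex_add_two_mul]
    positivity
  have h_pos (j : ℕ) : 0 < chiSqCrossMoment (p + 2 * j) n m w :=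
    chiSqCrossMoment_pos (by omega) (Nat.pos_of_ne_zero hn) hw (hs_j j)
  refine hasSum_lt (f := 0) (i := 0) (fun j ↦ ?_) ?_ hasSum_zero
    (hasSum_integral_pow_mul_ncChiSqPdf_mul_chiSqPdf hp hlam hw hs).2
  · exact mul_nonneg (poissonWeight_nonneg hlam j) (h_pos j).le
  · exact mul_pos (poissonWeight_zero_pos lam) (h_pos 0)

theorem two_mul_chiSqCrossIndex_mul_integral_le {p n m : ℕ} {lam w : ℝ} (hp : p ≠ 0)
    (hlam : 0 ≤ lam) (hw : 0 < w) (hs : 0 < chiSqCrossIndex p n m) :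
    2 * chiSqCrossIndex p n m * ∫ u in Ioi 0, u ^ m * ncChiSqPdf p lam (u * w) * chiSqPdf n u ≤
      (1 + w) * ∫ u in Ioi 0, u ^ (m + 1) * ncChiSqPdf p lam (u * w) * chiSqPdf n u := by
  have hs_succ : 0 < chiSqCrossIndex p n (m + 1) := by
    simp only [chiSqCrossIndex] at hs ⊢
    push_cast
    linarith
  refine hasSum_le (fun j ↦ ?_)
    ((hasSum_integral_pow_mul_ncChiSqPdf_mul_chiSqPdf hp hlam hw hs).2.mul_left _)
    ((hasSum_integral_pow_mul_ncChiSqPdf_mul_chiSqPdf hp hlam hw hs_succ).2.mul_left _)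
  have hs_j : 0 < chiSqCrossIndex (p + 2 * j) n m := by
    rw [chiSqCrossIndex_add_two_mul]
    positivity
  have h_term := mul_nonneg (poissonWeight_nonneg hlam j) (chiSqCrossMoment_nonneg hw hs_j)
  calc 2 * chiSqCrossIndex p n m * (poissonWeight lam j * chiSqCrossMoment (p + 2 * j) n m w)
      ≤ 2 * chiSqCrossIndex (p + 2 * j) n m *
          (poissonWeight lam j * chiSqCrossMoment (p + 2 * j) n m w) := by
        rw [chiSqCrossIndex_add_two_mul]
        gcongr
        simp
    _ = (1 + w) * (poissonWeight lam j * chiSqCrossMoment (p + 2 * j) n (m + 1) w) := by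
        rw [mul_left_comm (1 + w), chiSqCrossMoment_succ hw hs_j]
        ring

end NoncentralCrossMoments

/-- for p, n ≥ 1, λ ≥ 0 and w > 0, the integrals
∫ u² f_p(uw;λ) f_n(u) du and ∫ u³ f_p(uw;λ) f_n(u) du are finite and positive and
(n+p+2)·∫ u² f_p(uw;λ) f_n(u) du ≤ (1+w)·∫ u³ f_p(uw;λ) f_n(u) du. -/
theorem stmt_12 (p n : ℕ) (hp : 1 ≤ p) (hn : 1 ≤ n) (lam : ℝ) (hlam : 0 ≤ lam)
    (w : ℝ) (hw : 0 < w) :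
    IntegrableOn (fun u => u ^ 2 * ncChiSqPdf p lam (u * w) * chiSqPdf n u) (Ioi 0) ∧
    IntegrableOn (fun u => u ^ 3 * ncChiSqPdf p lam (u * w) * chiSqPdf n u) (Ioi 0) ∧
    (0 < ∫ u in Ioi (0 : ℝ), u ^ 2 * ncChiSqPdf p lam (u * w) * chiSqPdf n u) ∧
    (0 < ∫ u in Ioi (0 : ℝ), u ^ 3 * ncChiSqPdf p lam (u * w) * chiSqPdf n u) ∧
    ((n : ℝ) + p + 2) * ∫ u in Ioi (0 : ℝ), u ^ 2 * ncChiSqPdf p lam (u * w) * chiSqPdf n u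
      ≤ (1 + w) * ∫ u in Ioi (0 : ℝ), u ^ 3 * ncChiSqPdf p lam (u * w) * chiSqPdf n u := by
  have hp₀ : p ≠ 0 := by omega
  have hn₀ : n ≠ 0 := by omega
  have hs (m : ℕ) (hm : 1 ≤ m) : 0 < chiSqCrossIndex p n m := by
    have : (1 : ℝ) ≤ m := by exact_mod_cast hm
    have : (1 : ℝ) ≤ p := by exact_mod_cast hp
    have : (0 : ℝ) ≤ n := n.cast_nonneg
    unfold chiSqCrossIndex
    linarith
  have h_index : 2 * chiSqCrossIndex p n 2 = n + p + 2 := by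
    simp only [chiSqCrossIndex]
    push_cast
    ring
  refine ⟨(hasSum_integral_pow_mul_ncChiSqPdf_mul_chiSqPdf hp₀ hlam hw (hs 2 (by norm_num))).1,
    (hasSum_integral_pow_mul_ncChiSqPdf_mul_chiSqPdf hp₀ hlam hw (hs 3 (by norm_num))).1,
    integral_pow_mul_ncChiSqPdf_mul_chiSqPdf_pos hp₀ hn₀ hlam hw (hs 2 (by norm_num)),
    integral_pow_mul_ncChiSqPdf_mul_chiSqPdf_pos hp₀ hn₀ hlam hw (hs 3 (by norm_num)), ?_⟩
  simpa only [← h_index] using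
    two_mul_chiSqCrossIndex_mul_integral_le hp₀ hlam hw (hs 2 (by norm_num))
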